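/- Let τ>0 and T = tanh(2τ)/2. The map S : L²((0,τ);ℂ) → L²((0,T);ℂ) defined by (Su₀)(t) = (1 − 4(T−t)²)^{−1/4} · u₀(τ − artanh(2(T−t))/2) satisfies ∫₀^T |Su₀(t)|² dt = ∫₀^τ |u₀(s)|²/cosh(2(τ−s)) ds for every u₀ ∈ L²((0,τ);ℂ); consequently (1/cosh(2τ))·∫₀^τ |u₀(s)|² ds ≤ ∫₀^T |Su₀(t)|² dt ≤ ∫₀^τ |u₀(s)|² ds, so S is a bounded bijective operator with bounded inverse. -/

import Mathlib

open MeasureTheory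
open scoped ENNReal

/-- Inverse hyperbolic tangent. -/
noncomputable def artanh (x : ℝ) : ℝ := Real.log ((1 + x) / (1 - x)) / 2

/-- The substitution operator `S` mapping `L²(0,τ)` to `L²(0,T)`, `T = tanh(2τ)/2`. -/
noncomputable def Sop (τ T : ℝ) (u0 : ℝ → ℂ) (t : ℝ) : ℂ :=
  (((1 - 4 * (T - t) ^ 2) ^ (-(1 : ℝ) / 4) : ℝ) : ℂ) * u0 (τ - artanh (2 * (T - t)) / 2)

namespace Stmt4Aux

lemma tanh_lt_one (x : ℝ) : Real.tanh x < 1 := by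
  rw [Real.tanh_eq_sinh_div_cosh, div_lt_one (Real.cosh_pos x)]
  exact Real.sinh_lt_cosh x

lemma tanh_pos {x : ℝ} (hx : 0 < x) : 0 < Real.tanh x := by
  rw [Real.tanh_eq_sinh_div_cosh]
  exact div_pos (Real.sinh_pos_iff.mpr hx) (Real.cosh_pos x)

lemma one_sub_tanh_sq (x : ℝ) : 1 - Real.tanh x ^ 2 = (Real.cosh x ^ 2)⁻¹ := by
  have h := (Real.cosh_pos x).ne'
  have h2 := Real.cosh_sq_sub_sinh_sq x
  rw [Real.tanh_eq_sinh_div_cosh, div_pow]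
  field_simp
  exact h2

lemma artanh_tanh (x : ℝ) : artanh (Real.tanh x) = x := by
  have h := (Real.cosh_pos x).ne'
  have h1 : 1 + Real.tanh x = Real.exp x / Real.cosh x := by
    rw [Real.tanh_eq_sinh_div_cosh, ← Real.cosh_add_sinh]; field_simp
  have h2 : 1 - Real.tanh x = Real.exp (-x) / Real.cosh x := by
    rw [Real.tanh_eq_sinh_div_cosh, ← Real.cosh_sub_sinh]; field_simp
  have h3 : (1 + Real.tanh x) / (1 - Real.tanh x) = Real.exp (x - -x) := by
    rw [h1, h2, Real.exp_sub]
    rw [div_div_div_cancel_right₀]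
    exact (Real.cosh_pos x).ne'
  rw [artanh, h3, Real.log_exp]; ring

lemma tanh_artanh {x : ℝ} (h1 : -1 < x) (h2 : x < 1) : Real.tanh (artanh x) = x := by
  have hx1 : (0:ℝ) < 1 + x := by linarith
  have hx2 : (0:ℝ) < 1 - x := by linarith
  have hr : 0 < (1 + x) / (1 - x) := div_pos hx1 hx2
  set y := artanh x with hy
  have hapos : 0 < Real.exp y := Real.exp_pos y
  have ha2 : Real.exp y ^ 2 = (1 + x) / (1 - x) := by
    rw [pow_two, ← Real.exp_add, hy, artanh]
    rw [show Real.log ((1+x)/(1-x)) / 2 + Real.log ((1+x)/(1-x)) / 2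
        = Real.log ((1+x)/(1-x)) by ring, Real.exp_log hr]
  set a := Real.exp y with haa
  have key : (1 - x) * a ^ 2 = 1 + x := by
    rw [ha2]; field_simp
  have hsum : 0 < a + a⁻¹ := by positivity
  have step : (a - a⁻¹) / (a + a⁻¹) = (a ^ 2 - 1) / (a ^ 2 + 1) := by
    rw [div_eq_div_iff hsum.ne' (by positivity)]
    field_simp
  rw [Real.tanh_eq_sinh_div_cosh, Real.sinh_eq, Real.cosh_eq, Real.exp_neg, ← haa]
  rw [show (a - a⁻¹) / 2 / ((a + a⁻¹) / 2) = (a - a⁻¹) / (a + a⁻¹) by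
    rw [div_div_div_cancel_right₀]; norm_num]
  rw [step, div_eq_iff (by positivity)]
  linarith [key]

lemma cosh_sq_artanh {x : ℝ} (h1 : -1 < x) (h2 : x < 1) :
    Real.cosh (artanh x) ^ 2 = (1 - x ^ 2)⁻¹ := by
  have h := one_sub_tanh_sq (artanh x)
  rw [tanh_artanh h1 h2] at h
  rw [h, inv_inv]

lemma hasDerivAt_tanh (x : ℝ) : HasDerivAt Real.tanh ((Real.cosh x ^ 2)⁻¹) x := by
  have h := (Real.hasDerivAt_sinh x).div (Real.hasDerivAt_cosh x) (Real.cosh_pos x).ne'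
  have e : Real.tanh = fun x => Real.sinh x / Real.cosh x := funext Real.tanh_eq_sinh_div_cosh
  rw [e]
  have h2 : Real.cosh x * Real.cosh x - Real.sinh x * Real.sinh x = 1 := by
    nlinarith [Real.cosh_sq_sub_sinh_sq x]
  exact h.congr_deriv (by rw [h2, one_div])

lemma tanh_strictMono : StrictMono Real.tanh :=
  strictMono_of_deriv_pos fun x => by
    rw [(hasDerivAt_tanh x).deriv]; positivity

lemma rpow_inv_sq {c : ℝ} (hc : 0 < c) :
    ((c ^ 2)⁻¹ : ℝ) ^ (-(1 : ℝ) / 4) = c ^ ((1 : ℝ) / 2) := by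
  have h1 : ((c ^ 2)⁻¹ : ℝ) = c ^ ((-2 : ℝ)) := by
    rw [show (-2 : ℝ) = -((2 : ℕ) : ℝ) by norm_num, Real.rpow_neg hc.le, Real.rpow_natCast]
  rw [h1, ← Real.rpow_mul hc.le]
  norm_num

lemma rpow_sq {c : ℝ} (hc : 0 ≤ c) (r : ℝ) : (c ^ r) ^ (2 : ℕ) = c ^ (r * 2) := by
  rw [← Real.rpow_natCast (c ^ r) 2, ← Real.rpow_mul hc]
  norm_num

lemma norm_sq_real_mul (r : ℝ) (z : ℂ) (hr : 0 ≤ r) :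
    ‖((r : ℝ) : ℂ) * z‖ ^ 2 = r ^ 2 * ‖z‖ ^ 2 := by
  rw [norm_mul, Complex.norm_real, Real.norm_eq_abs, abs_of_nonneg hr, mul_pow]

lemma image_null {f : ℝ → ℝ} {f' : ℝ → ℝ} (hf : ∀ x, HasDerivAt f (f' x) x)
    {N : Set ℝ} (hN : MeasurableSet N) (h0 : volume N = 0) : volume (f '' N) = 0 := by
  have hle := MeasureTheory.addHaar_image_le_lintegral_abs_det_fderiv volume hN
    (f' := fun x => ContinuousLinearMap.smulRight (1 : ℝ →L[ℝ] ℝ) (f' x))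
    (fun x _ => ((hf x).hasFDerivAt).hasFDerivWithinAt)
  rw [setLIntegral_measure_zero _ _ h0] at hle
  exact le_antisymm hle zero_le

lemma memLp_two_iff_aux {μ : Measure ℝ} {f : ℝ → ℂ} (h : AEStronglyMeasurable f μ) :
    MemLp f 2 μ ↔ Integrable (fun x => ‖f x‖ ^ 2) μ := by
  have e : (fun x => ‖f x‖ ^ ((2 : ℝ≥0∞)).toReal) = fun x => ‖f x‖ ^ (2 : ℕ) := by
    funext x
    rw [ENNReal.toReal_ofNat, show ((2 : ℝ)) = ((2 : ℕ) : ℝ) by norm_num, Real.rpow_natCast]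
  constructor
  · intro hm
    have h2 := hm.integrable_norm_rpow (by norm_num) (by norm_num)
    rwa [e] at h2
  · intro hi
    have h2 : Integrable (fun x => ‖f x‖ ^ ((2 : ℝ≥0∞)).toReal) μ := by rw [e]; exact hi
    have h3 : MemLp (fun x => ‖f x‖ ^ ((2 : ℝ≥0∞)).toReal) ((2 : ℝ≥0∞) / 2) μ := by
      rw [ENNReal.div_self (by norm_num) (by norm_num)]
      exact memLp_one_iff_integrable.mpr h2
    exact (memLp_norm_rpow_iff h (by norm_num) (by norm_num)).mp h3

end Stmt4Aux

theorem stmt4 (τ : ℝ) (hτ : 0 < τ) (T : ℝ) (hT : T = Real.tanh (2 * τ) / 2) :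
    (∀ u0 : ℝ → ℂ, MemLp u0 2 (volume.restrict (Set.Ioo 0 τ)) →
      MemLp (Sop τ T u0) 2 (volume.restrict (Set.Ioo 0 T))
      ∧ (∫ t in Set.Ioo 0 T, ‖Sop τ T u0 t‖ ^ 2) =
          ∫ s in Set.Ioo 0 τ, ‖u0 s‖ ^ 2 / Real.cosh (2 * (τ - s))
      ∧ (1 / Real.cosh (2 * τ)) * ∫ s in Set.Ioo 0 τ, ‖u0 s‖ ^ 2 ≤
          ∫ t in Set.Ioo 0 T, ‖Sop τ T u0 t‖ ^ 2
      ∧ (∫ t in Set.Ioo 0 T, ‖Sop τ T u0 t‖ ^ 2) ≤ ∫ s in Set.Ioo 0 τ, ‖u0 s‖ ^ 2)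
    ∧ (∀ v : ℝ → ℂ, MemLp v 2 (volume.restrict (Set.Ioo 0 T)) →
        ∃ u0 : ℝ → ℂ, MemLp u0 2 (volume.restrict (Set.Ioo 0 τ))
          ∧ ∀ᵐ t ∂(volume.restrict (Set.Ioo 0 T)), Sop τ T u0 t = v t) := by
  -- the substitution map and its properties
  set f : ℝ → ℝ := fun s => T - Real.tanh (2 * (τ - s)) / 2 with hfdef
  have hderiv : ∀ s, HasDerivAt f ((Real.cosh (2 * (τ - s)) ^ 2)⁻¹) s := by
    intro s
    have h1 : HasDerivAt (fun s : ℝ => 2 * (τ - s)) (-2) s := by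
      simpa using (((hasDerivAt_id s).const_sub τ).const_mul (2 : ℝ))
    have h2 := (Stmt4Aux.hasDerivAt_tanh (2 * (τ - s))).comp s h1
    have h3 := (h2.div_const 2).const_sub T
    exact h3.congr_deriv (by ring)
  have hmono : StrictMono f :=
    strictMono_of_deriv_pos fun x => by
      rw [(hderiv x).deriv]; positivity
  have hcont : Continuous f := by
    rw [continuous_iff_continuousAt]; exact fun x => (hderiv x).continuousAt
  have hf0 : f 0 = 0 := by simp [hfdef, hT]
  have hfτ : f τ = T := by simp [hfdef]
  have hTpos : 0 < T := by
    rw [hT]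
    have := Stmt4Aux.tanh_pos (show (0:ℝ) < 2 * τ by linarith)
    linarith
  have hT1 : 2 * T < 1 := by
    have := Stmt4Aux.tanh_lt_one (2 * τ)
    rw [hT]; linarith
  have himg : f '' Set.Ioo 0 τ = Set.Ioo 0 T := by
    apply Set.Subset.antisymm
    · rintro _ ⟨s, hs, rfl⟩
      exact ⟨hf0 ▸ hmono hs.1, hfτ ▸ hmono hs.2⟩
    · have h := intermediate_value_Ioo hτ.le hcont.continuousOn
      rw [hf0, hfτ] at h
      exact h
  -- pointwise formula for Sop along f
  have hTf : ∀ s, 2 * (T - f s) = Real.tanh (2 * (τ - s)) := by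
    intro s; simp only [hfdef]; ring
  have hpoint : ∀ (u : ℝ → ℂ) (s : ℝ),
      Sop τ T u (f s) = ((Real.cosh (2 * (τ - s)) ^ ((1:ℝ)/2) : ℝ) : ℂ) * u s := by
    intro u s
    have hc := Real.cosh_pos (2 * (τ - s))
    have h4 : 1 - 4 * (T - f s) ^ 2 = (Real.cosh (2 * (τ - s)) ^ 2)⁻¹ := by
      have he : 4 * (T - f s) ^ 2 = (2 * (T - f s)) ^ 2 := by ring
      rw [he, hTf s, ← Stmt4Aux.one_sub_tanh_sq]
    have h5 : τ - artanh (2 * (T - f s)) / 2 = s := by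
      rw [hTf s, Stmt4Aux.artanh_tanh]; ring
    unfold Sop
    rw [h4, h5, Stmt4Aux.rpow_inv_sq hc]
  have hnormsq : ∀ (u : ℝ → ℂ) (s : ℝ),
      ‖Sop τ T u (f s)‖ ^ 2 = Real.cosh (2 * (τ - s)) * ‖u s‖ ^ 2 := by
    intro u s
    have hc := Real.cosh_pos (2 * (τ - s))
    rw [hpoint u s, Stmt4Aux.norm_sq_real_mul _ _ (Real.rpow_nonneg hc.le _)]
    rw [Stmt4Aux.rpow_sq hc.le]
    norm_num
  -- the |f'| • (g ∘ f) function
  have habs : ∀ (u : ℝ → ℂ) (s : ℝ),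
      |(Real.cosh (2 * (τ - s)) ^ 2)⁻¹| • ‖Sop τ T u (f s)‖ ^ 2
        = ‖u s‖ ^ 2 / Real.cosh (2 * (τ - s)) := by
    intro u s
    have hc := Real.cosh_pos (2 * (τ - s))
    rw [abs_of_nonneg (by positivity), smul_eq_mul, hnormsq u s]
    field_simp
  have hCOVint : ∀ u : ℝ → ℂ,
      ∫ t in Set.Ioo 0 T, ‖Sop τ T u t‖ ^ 2
        = ∫ s in Set.Ioo 0 τ, ‖u s‖ ^ 2 / Real.cosh (2 * (τ - s)) := by
    intro u
    rw [← himg, integral_image_eq_integral_abs_deriv_smul measurableSet_Ioo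
      (fun x _ => (hderiv x).hasDerivWithinAt) (hmono.injective.injOn)
      (fun t => ‖Sop τ T u t‖ ^ 2)]
    exact setIntegral_congr_fun measurableSet_Ioo fun s _ => habs u s
  have hCOViff : ∀ u : ℝ → ℂ,
      IntegrableOn (fun t => ‖Sop τ T u t‖ ^ 2) (Set.Ioo 0 T)
        ↔ IntegrableOn (fun s => ‖u s‖ ^ 2 / Real.cosh (2 * (τ - s))) (Set.Ioo 0 τ) := by
    intro u
    rw [← himg, integrableOn_image_iff_integrableOn_abs_deriv_smul measurableSet_Ioo
      (fun x _ => (hderiv x).hasDerivWithinAt) (hmono.injective.injOn)]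
    exact integrableOn_congr_fun (fun s _ => habs u s) measurableSet_Ioo
  -- the inverse map facts
  have hφmem : ∀ t ∈ Set.Ioo 0 T, (τ - artanh (2 * (T - t)) / 2) ∈ Set.Ioo 0 τ := by
    intro t ht
    have hx0 : 0 < 2 * (T - t) := by have := ht.2; linarith
    have hx1 : 2 * (T - t) < 1 := by have := ht.1; linarith [hT1]
    have h1 : 0 < artanh (2 * (T - t)) := by
      have h := Stmt4Aux.tanh_strictMono.lt_iff_lt (a := 0) (b := artanh (2 * (T - t)))
      rw [Real.tanh_zero, Stmt4Aux.tanh_artanh (by linarith) hx1] at h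
      exact h.mp hx0
    have h2 : artanh (2 * (T - t)) < 2 * τ := by
      have h := Stmt4Aux.tanh_strictMono.lt_iff_lt (a := artanh (2 * (T - t))) (b := 2 * τ)
      rw [Stmt4Aux.tanh_artanh (by linarith) hx1] at h
      apply h.mp
      have hTT : Real.tanh (2 * τ) = 2 * T := by rw [hT]; ring
      rw [hTT]
      have := ht.1
      linarith
    exact ⟨by linarith, by linarith⟩
  have hfφ : ∀ t ∈ Set.Ioo 0 T, f (τ - artanh (2 * (T - t)) / 2) = t := by
    intro t ht
    have hx0 : 0 < 2 * (T - t) := by have := ht.2; linarith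
    have hx1 : 2 * (T - t) < 1 := by have := ht.1; linarith [hT1]
    simp only [hfdef]
    rw [show 2 * (τ - (τ - artanh (2 * (T - t)) / 2)) = artanh (2 * (T - t)) by ring,
      Stmt4Aux.tanh_artanh (by linarith) hx1]
    ring
  constructor
  · -- forward direction
    intro u0 hu
    set g : ℝ → ℂ := hu.1.mk u0 with hgdef
    have hgsm : StronglyMeasurable g := hu.1.stronglyMeasurable_mk
    have hgae : u0 =ᵐ[volume.restrict (Set.Ioo 0 τ)] g := hu.1.ae_eq_mk
    have hnull : volume ({x | u0 x ≠ g x} ∩ Set.Ioo 0 τ) = 0 := by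
      have h := ae_iff.mp hgae
      rwa [Measure.restrict_apply' measurableSet_Ioo] at h
    set N := toMeasurable volume ({x | u0 x ≠ g x} ∩ Set.Ioo 0 τ) with hNdef
    have hN0 : volume N = 0 := by
      rw [hNdef, measure_toMeasurable]; exact hnull
    have himgN : volume (f '' N) = 0 :=
      Stmt4Aux.image_null hderiv (measurableSet_toMeasurable _ _) hN0
    have haeeq : Sop τ T u0 =ᵐ[volume.restrict (Set.Ioo 0 T)] Sop τ T g := by
      rw [Filter.eventuallyEq_iff_exists_mem]
      refine ⟨{t | Sop τ T u0 t = Sop τ T g t}, ?_, fun x hx => hx⟩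
      rw [mem_ae_iff, Measure.restrict_apply' measurableSet_Ioo]
      refine measure_mono_null ?_ himgN
      rintro t ⟨hne, ht⟩
      simp only [Set.mem_compl_iff, Set.mem_setOf_eq] at hne
      have hmem := hφmem t ht
      have hfeq := hfφ t ht
      have harg : u0 (τ - artanh (2 * (T - t)) / 2) ≠ g (τ - artanh (2 * (T - t)) / 2) := by
        intro hcontra
        apply hne
        unfold Sop
        rw [hcontra]
      exact ⟨τ - artanh (2 * (T - t)) / 2, subset_toMeasurable _ _ ⟨harg, hmem⟩, hfeq⟩
    have haesm_g : AEStronglyMeasurable (Sop τ T g) (volume.restrict (Set.Ioo 0 T)) := by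
      have hc : ContinuousOn (fun t : ℝ => (1 - 4 * (T - t) ^ 2) ^ (-(1:ℝ)/4)) (Set.Ioo 0 T) := by
        refine ContinuousOn.rpow_const (Continuous.continuousOn (by fun_prop)) ?_
        · intro t ht
          left
          have hx0 : 0 < 2 * (T - t) := by have := ht.2; linarith
          have hx1 : 2 * (T - t) < 1 := by have := ht.1; linarith [hT1]
          have hpos : 0 < 1 - 4 * (T - t) ^ 2 := by nlinarith
          exact hpos.ne'
      have hφmeas : Measurable (fun t : ℝ => τ - artanh (2 * (T - t)) / 2) := by
        have m1 : Measurable (fun t : ℝ => Real.log ((1 + 2 * (T - t)) / (1 - 2 * (T - t)))) :=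
          (Measurable.div (by fun_prop) (by fun_prop)).log
        unfold artanh
        exact measurable_const.sub ((m1.div_const 2).div_const 2)
      have h1 : AEStronglyMeasurable
          (fun t : ℝ => (((1 - 4 * (T - t) ^ 2) ^ (-(1:ℝ)/4) : ℝ) : ℂ))
          (volume.restrict (Set.Ioo 0 T)) :=
        (Complex.continuous_ofReal.comp_continuousOn hc).aestronglyMeasurable measurableSet_Ioo
      have h2 : AEStronglyMeasurable (fun t : ℝ => g (τ - artanh (2 * (T - t)) / 2))
          (volume.restrict (Set.Ioo 0 T)) :=
        (hgsm.measurable.comp hφmeas).aestronglyMeasurable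
      exact h1.mul h2
    have haesm : AEStronglyMeasurable (Sop τ T u0) (volume.restrict (Set.Ioo 0 T)) :=
      haesm_g.congr haeeq.symm
    have hInt : IntegrableOn (fun s => ‖u0 s‖ ^ 2) (Set.Ioo 0 τ) :=
      (Stmt4Aux.memLp_two_iff_aux hu.1).mp hu
    have hIntDiv : IntegrableOn
        (fun s => ‖u0 s‖ ^ 2 / Real.cosh (2 * (τ - s))) (Set.Ioo 0 τ) := by
      apply hInt.mono'
      · have hicont : Continuous (fun s : ℝ => (Real.cosh (2 * (τ - s)))⁻¹) :=
          (Real.continuous_cosh.comp (by fun_prop)).inv₀ (fun x => (Real.cosh_pos _).ne')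
        simp only [div_eq_mul_inv]
        exact hInt.aestronglyMeasurable.mul hicont.aestronglyMeasurable
      · apply ae_of_all
        intro s
        have hc1 := Real.one_le_cosh (2 * (τ - s))
        rw [Real.norm_eq_abs, abs_of_nonneg (by positivity)]
        calc ‖u0 s‖ ^ 2 / Real.cosh (2 * (τ - s)) ≤ ‖u0 s‖ ^ 2 / 1 := by gcongr
          _ = ‖u0 s‖ ^ 2 := by ring
    have heq := hCOVint u0
    have hIntS : IntegrableOn (fun t => ‖Sop τ T u0 t‖ ^ 2) (Set.Ioo 0 T) :=
      (hCOViff u0).mpr hIntDiv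
    refine ⟨(Stmt4Aux.memLp_two_iff_aux haesm).mpr hIntS, heq, ?_, ?_⟩
    · rw [heq]
      have hrw : (1 / Real.cosh (2 * τ)) * ∫ s in Set.Ioo 0 τ, ‖u0 s‖ ^ 2
          = ∫ s in Set.Ioo 0 τ, (1 / Real.cosh (2 * τ)) * ‖u0 s‖ ^ 2 :=
        (integral_const_mul _ _).symm
      rw [hrw]
      apply setIntegral_mono_on (hInt.const_mul _) hIntDiv measurableSet_Ioo
      intro s hs
      have hc1 := Real.cosh_pos (2 * (τ - s))
      have hc2 := Real.cosh_pos (2 * τ)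
      have hmono2 : Real.cosh (2 * (τ - s)) ≤ Real.cosh (2 * τ) := by
        apply Real.cosh_le_cosh.mpr
        rw [abs_of_nonneg (by nlinarith [hs.1, hs.2] : (0:ℝ) ≤ 2 * (τ - s)),
          abs_of_nonneg (by linarith : (0:ℝ) ≤ 2 * τ)]
        nlinarith [hs.1]
      rw [show (1 / Real.cosh (2 * τ)) * ‖u0 s‖ ^ 2 = ‖u0 s‖ ^ 2 / Real.cosh (2 * τ) by ring]
      gcongr
    · rw [heq]
      apply setIntegral_mono_on hIntDiv hInt measurableSet_Ioo
      intro s _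
      have hc1 := Real.one_le_cosh (2 * (τ - s))
      calc ‖u0 s‖ ^ 2 / Real.cosh (2 * (τ - s)) ≤ ‖u0 s‖ ^ 2 / 1 := by gcongr
        _ = ‖u0 s‖ ^ 2 := by ring
  · -- surjectivity
    intro v hv
    set g : ℝ → ℂ := hv.1.mk v with hgdef
    have hgsm : StronglyMeasurable g := hv.1.stronglyMeasurable_mk
    have hgae : v =ᵐ[volume.restrict (Set.Ioo 0 T)] g := hv.1.ae_eq_mk
    set u0 : ℝ → ℂ := fun s => ((Real.cosh (2 * (τ - s)) ^ (-(1:ℝ)/2) : ℝ) : ℂ) * g (f s)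
      with hu0def
    have hpre : Continuous (fun s : ℝ => Real.cosh (2 * (τ - s)) ^ (-(1:ℝ)/2)) := by
      apply Continuous.rpow_const (by fun_prop)
      intro x; left; exact (Real.cosh_pos _).ne'
    have hu0meas : Measurable u0 :=
      (Complex.measurable_ofReal.comp hpre.measurable).mul
        (hgsm.measurable.comp hcont.measurable)
    have hnorm0 : ∀ s, ‖u0 s‖ ^ 2 = ‖g (f s)‖ ^ 2 / Real.cosh (2 * (τ - s)) := by
      intro s
      have hc := Real.cosh_pos (2 * (τ - s))
      rw [hu0def]
      rw [Stmt4Aux.norm_sq_real_mul _ _ (Real.rpow_nonneg hc.le _)]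
      rw [Stmt4Aux.rpow_sq hc.le, show (-(1:ℝ)/2) * 2 = -1 by norm_num, Real.rpow_neg_one]
      rw [inv_mul_eq_div]
    have hvInt : IntegrableOn (fun t => ‖v t‖ ^ 2) (Set.Ioo 0 T) :=
      (Stmt4Aux.memLp_two_iff_aux hv.1).mp hv
    have hgInt : IntegrableOn (fun t => ‖g t‖ ^ 2) (Set.Ioo 0 T) :=
      hvInt.congr (hgae.mono fun x hx => by simp only [hx])
    have hA : IntegrableOn
        (fun s => |(Real.cosh (2 * (τ - s)) ^ 2)⁻¹| • ‖g (f s)‖ ^ 2) (Set.Ioo 0 τ) := by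
      refine (integrableOn_image_iff_integrableOn_abs_deriv_smul measurableSet_Ioo
        (fun x _ => (hderiv x).hasDerivWithinAt) hmono.injective.injOn
        (fun t => ‖g t‖ ^ 2)).mp ?_
      rw [himg]
      exact hgInt
    have hu0Int : IntegrableOn (fun s => ‖u0 s‖ ^ 2) (Set.Ioo 0 τ) := by
      apply Integrable.mono' (hA.const_mul (Real.cosh (2 * τ)))
      · exact ((hu0meas.norm.pow_const 2)).aestronglyMeasurable
      · rw [ae_restrict_iff' measurableSet_Ioo]
        apply ae_of_all
        intro s hs
        rw [Real.norm_eq_abs, abs_of_nonneg (by positivity), hnorm0 s]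
        have hc := Real.cosh_pos (2 * (τ - s))
        have hc2 := Real.cosh_pos (2 * τ)
        have hmono2 : Real.cosh (2 * (τ - s)) ≤ Real.cosh (2 * τ) := by
          apply Real.cosh_le_cosh.mpr
          rw [abs_of_nonneg (by nlinarith [hs.1, hs.2] : (0:ℝ) ≤ 2 * (τ - s)),
            abs_of_nonneg (by linarith : (0:ℝ) ≤ 2 * τ)]
          nlinarith [hs.1]
        rw [abs_of_nonneg (by positivity : (0:ℝ) ≤ (Real.cosh (2 * (τ - s)) ^ 2)⁻¹),
          smul_eq_mul]
        have key : (1:ℝ) / Real.cosh (2 * (τ - s))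
            ≤ Real.cosh (2 * τ) / Real.cosh (2 * (τ - s)) ^ 2 := by
          rw [div_le_div_iff₀ hc (by positivity)]
          nlinarith
        calc ‖g (f s)‖ ^ 2 / Real.cosh (2 * (τ - s))
            = (1 / Real.cosh (2 * (τ - s))) * ‖g (f s)‖ ^ 2 := by ring
          _ ≤ (Real.cosh (2 * τ) / Real.cosh (2 * (τ - s)) ^ 2) * ‖g (f s)‖ ^ 2 :=
              mul_le_mul_of_nonneg_right key (sq_nonneg _)
          _ = Real.cosh (2 * τ) * ((Real.cosh (2 * (τ - s)) ^ 2)⁻¹ * ‖g (f s)‖ ^ 2) := by ring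
    have hpt : ∀ t ∈ Set.Ioo 0 T, Sop τ T u0 t = g t := by
      intro t ht
      have hx0 : 0 < 2 * (T - t) := by have := ht.2; linarith
      have hx1 : 2 * (T - t) < 1 := by have := ht.1; linarith [hT1]
      have hfeq := hfφ t ht
      unfold Sop
      rw [hu0def]
      simp only []
      rw [hfeq]
      rw [show 2 * (τ - (τ - artanh (2 * (T - t)) / 2)) = artanh (2 * (T - t)) by ring]
      have hcsq : Real.cosh (artanh (2 * (T - t))) ^ 2 = (1 - (2 * (T - t)) ^ 2)⁻¹ :=
        Stmt4Aux.cosh_sq_artanh (by linarith) hx1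
      have hbase : 1 - 4 * (T - t) ^ 2 = (Real.cosh (artanh (2 * (T - t))) ^ 2)⁻¹ := by
        rw [hcsq, inv_inv]; ring
      rw [hbase, Stmt4Aux.rpow_inv_sq (Real.cosh_pos _)]
      rw [← mul_assoc, ← Complex.ofReal_mul, ← Real.rpow_add (Real.cosh_pos _)]
      norm_num
    refine ⟨u0, (Stmt4Aux.memLp_two_iff_aux hu0meas.aestronglyMeasurable).mpr hu0Int, ?_⟩
    have hmem : ∀ᵐ t ∂(volume.restrict (Set.Ioo 0 T)), t ∈ Set.Ioo 0 T :=
      ae_restrict_mem measurableSet_Ioo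
    filter_upwards [hmem, hgae] with t ht hvg
    rw [hpt t ht, hvg]
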